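/- (Proposition 2.) Let ψ: ℝ → ℂ and h: ℝ → ℝ be integrable with ∫_ℝ h(u) du = 1 and (s,t,u) ↦ h(u) ψ(s−u) conj(ψ(t−u)) integrable on ℝ³, and let K(s,t) = ∫_ℝ h(u) ψ(s−u) conj(ψ(t−u)) du. Suppose also that K admits the expansion K(s,t) = ∑_{l=0}^∞ η_l φ_l(s) conj(φ_l(t)) pointwise, where each φ_l: ℝ → ℂ is integrable, η_l ≥ 0, and ∑_l η_l (∫_ℝ |φ_l(s)| ds)² < ∞. Then for every f ∈ ℝ, ∑_{l=0}^∞ η_l |Φ_l(f)|² = |Ψ(f)|², where Ψ and Φ_l are the Fourier transforms of ψ and φ_l. -/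

import Mathlib

open MeasureTheory Complex
open scoped ENNReal NNReal

/-- The Fourier kernel `e^{-i 2 π x}`. -/
noncomputable def fker (x : ℝ) : ℂ := Complex.exp (-2 * Real.pi * x * Complex.I)

lemma fker_continuous : Continuous fker := by unfold fker; fun_prop

lemma fker_eq (x : ℝ) : fker x = Complex.exp (((-2 * Real.pi * x : ℝ) : ℂ) * Complex.I) := by
  unfold fker; push_cast; ring_nf

lemma fker_norm (x : ℝ) : ‖fker x‖ = 1 := by
  rw [fker_eq, Complex.norm_exp_ofReal_mul_I]

lemma fker_nnnorm (x : ℝ) : ‖fker x‖₊ = 1 := by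
  ext; simp [fker_norm]

lemma fker_normSq (x : ℝ) : Complex.normSq (fker x) = 1 := by
  rw [← Complex.sq_norm, fker_norm, one_pow]

lemma fker_add (a b : ℝ) : fker (a + b) = fker a * fker b := by
  unfold fker; rw [← Complex.exp_add]; congr 1; push_cast; ring

lemma shift_int (g : ℝ → ℂ) (f u : ℝ) :
    ∫ s, g (s - u) * fker (f * s) = fker (f * u) * ∫ x, g x * fker (f * x) := by
  have h1 : ∀ s : ℝ, g (s - u) * fker (f * s) = (fun x => g x * fker (f * (x + u))) (s - u) := by
    intro s; simp
  simp_rw [h1]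
  rw [integral_sub_right_eq_self (fun x => g x * fker (f * (x + u))) u]
  simp_rw [mul_add, fker_add, ← mul_assoc]
  rw [integral_mul_const, mul_comm]

lemma fker_mul_conj (x : ℝ) : fker x * starRingEnd ℂ (fker x) = 1 := by
  rw [Complex.mul_conj, fker_normSq, Complex.ofReal_one]

lemma stepA (ψ : ℝ → ℂ) (h : ℝ → ℝ) (hψ : Integrable ψ) (hh : Integrable h) (hh1 : ∫ u, h u = 1)
    (hint : Integrable (fun p : ℝ × ℝ × ℝ =>
      (h p.2.2 : ℂ) * ψ (p.1 - p.2.2) * starRingEnd ℂ (ψ (p.2.1 - p.2.2)))) (f : ℝ) :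
    (∫ q : ℝ × ℝ, (∫ u, (h u : ℂ) * ψ (q.1 - u) * starRingEnd ℂ (ψ (q.2 - u))) * fker (f * q.1)
        * starRingEnd ℂ (fker (f * q.2)))
      = (∫ t, ψ t * fker (f * t)) * starRingEnd ℂ (∫ t, ψ t * fker (f * t)) := by
  have hfc := fker_continuous
  set I : ℂ := ∫ t, ψ t * fker (f * t) with hI
  set G : ℝ × ℝ × ℝ → ℂ := fun p =>
    (h p.2.2 : ℂ) * ψ (p.1 - p.2.2) * starRingEnd ℂ (ψ (p.2.1 - p.2.2)) *
      (fker (f * p.1) * starRingEnd ℂ (fker (f * p.2.1))) with hG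
  have hcont : Continuous fun p : ℝ × ℝ × ℝ => fker (f * p.1) * starRingEnd ℂ (fker (f * p.2.1)) := by
    apply Continuous.mul
    · exact hfc.comp (continuous_const.mul continuous_fst)
    · exact continuous_star.comp (hfc.comp (continuous_const.mul (continuous_fst.comp continuous_snd)))
  have hGm : AEStronglyMeasurable G volume := hint.1.mul hcont.aestronglyMeasurable
  have hGint : Integrable G := by
    refine Integrable.mono' hint.norm hGm (Filter.Eventually.of_forall fun p => ?_)
    simp only [hG, norm_mul, fker_norm, RCLike.norm_conj, mul_one]
    exact le_of_eq (by ring)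
  have hassoc := MeasureTheory.volume_preserving_prodAssoc (α₁ := ℝ) (β₁ := ℝ) (γ₁ := ℝ)
  have hGassoc : Integrable (fun r : (ℝ × ℝ) × ℝ => G (MeasurableEquiv.prodAssoc r)) :=
    (hassoc.integrable_comp_emb MeasurableEquiv.prodAssoc.measurableEmbedding).2 hGint
  have hcomm : MeasurePreserving (⇑(MeasurableEquiv.prodComm : ℝ × (ℝ × ℝ) ≃ᵐ (ℝ × ℝ) × ℝ)) volume volume :=
    Measure.measurePreserving_swap
  have hτ : MeasurePreserving
      (⇑((MeasurableEquiv.prodComm : ℝ × (ℝ × ℝ) ≃ᵐ (ℝ × ℝ) × ℝ).trans MeasurableEquiv.prodAssoc)) volume volume :=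
    hassoc.comp hcomm
  set τ := (MeasurableEquiv.prodComm : ℝ × (ℝ × ℝ) ≃ᵐ (ℝ × ℝ) × ℝ).trans MeasurableEquiv.prodAssoc with hτdef
  have hGt : Integrable (fun p : ℝ × ℝ × ℝ => G (τ p)) :=
    (hτ.integrable_comp_emb τ.measurableEmbedding).2 hGint
  have e1 : ∀ q : ℝ × ℝ,
      (∫ u, (h u : ℂ) * ψ (q.1 - u) * starRingEnd ℂ (ψ (q.2 - u))) * fker (f * q.1)
        * starRingEnd ℂ (fker (f * q.2)) = ∫ u, G (q.1, q.2, u) := by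
    intro q
    rw [mul_assoc, ← integral_mul_const]
  calc (∫ q : ℝ × ℝ, (∫ u, (h u : ℂ) * ψ (q.1 - u) * starRingEnd ℂ (ψ (q.2 - u))) * fker (f * q.1)
        * starRingEnd ℂ (fker (f * q.2)))
      = ∫ q : ℝ × ℝ, ∫ u, G (q.1, q.2, u) := by simp_rw [e1]
    _ = ∫ r : (ℝ × ℝ) × ℝ, G (MeasurableEquiv.prodAssoc r) :=
        (integral_prod _ hGassoc).symm
    _ = ∫ p : ℝ × ℝ × ℝ, G p := hassoc.integral_comp' G
    _ = ∫ p : ℝ × ℝ × ℝ, G (τ p) := (hτ.integral_comp' G).symm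
    _ = ∫ u, ∫ w : ℝ × ℝ, G (τ (u, w)) := integral_prod _ hGt
    _ = ∫ u, (h u : ℂ) * (I * starRingEnd ℂ I) := by
        apply integral_congr_ae
        have h2 := (by rw [Measure.volume_eq_prod] at hGt; exact hGt.prod_right_ae :
          ∀ᵐ u : ℝ, Integrable (fun w : ℝ × ℝ => G (τ (u, w))) (volume.prod volume))
        filter_upwards [h2] with u hu
        have inner : ∀ s : ℝ, ∫ t, G (τ (u, (s, t)))
            = ((h u : ℂ) * starRingEnd ℂ (fker (f * u) * I)) * (ψ (s - u) * fker (f * s)) := by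
          intro s
          have e : ∀ t : ℝ, G (τ (u, (s, t)))
              = ((h u : ℂ) * ψ (s - u) * fker (f * s)) * starRingEnd ℂ (ψ (t - u) * fker (f * t)) := by
            intro t
            show (h u : ℂ) * ψ (s - u) * starRingEnd ℂ (ψ (t - u)) *
              (fker (f * s) * starRingEnd ℂ (fker (f * t))) = _
            rw [map_mul]; ring
          simp_rw [e]
          rw [integral_const_mul, integral_conj, shift_int ψ f u, ← hI]
          ring
        calc ∫ w : ℝ × ℝ, G (τ (u, w))
            = ∫ s, ∫ t, G (τ (u, (s, t))) := integral_prod _ hu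
          _ = ∫ s, ((h u : ℂ) * starRingEnd ℂ (fker (f * u) * I)) * (ψ (s - u) * fker (f * s)) := by
              simp_rw [inner]
          _ = ((h u : ℂ) * starRingEnd ℂ (fker (f * u) * I)) * (fker (f * u) * I) := by
              rw [integral_const_mul]
              congr 1
              rw [shift_int ψ f u, ← hI]
          _ = (h u : ℂ) * (I * starRingEnd ℂ I) := by
              rw [map_mul]
              have := fker_mul_conj (f * u)
              calc (h u : ℂ) * (starRingEnd ℂ (fker (f * u)) * starRingEnd ℂ I) * (fker (f * u) * I)
                  = (h u : ℂ) * (I * starRingEnd ℂ I) * (fker (f * u) * starRingEnd ℂ (fker (f * u))) := by ring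
                _ = (h u : ℂ) * (I * starRingEnd ℂ I) := by rw [this, mul_one]
    _ = I * starRingEnd ℂ I := by
        have hcoe : ∫ a, (h a : ℂ) = ((∫ a, h a : ℝ) : ℂ) := by
          simpa using Complex.ofRealCLM.integral_comp_comm hh
        rw [integral_mul_const, hcoe, hh1, Complex.ofReal_one, one_mul]

lemma stepB (φ : ℕ → ℝ → ℂ) (η : ℕ → ℝ) (hφ : ∀ l, Integrable (φ l)) (hη : ∀ l, 0 ≤ η l)
    (hsum : Summable fun l => η l * (∫ s, ‖φ l s‖) ^ 2) (f : ℝ) :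
    (∫ q : ℝ × ℝ, (∑' l, (η l : ℂ) * φ l q.1 * starRingEnd ℂ (φ l q.2)) * fker (f * q.1)
        * starRingEnd ℂ (fker (f * q.2)))
      = ∑' l, (η l : ℂ) *
          ((∫ t, φ l t * fker (f * t)) * starRingEnd ℂ (∫ t, φ l t * fker (f * t))) := by
  have hfc := fker_continuous
  set g : ℕ → ℝ × ℝ → ℂ := fun l q =>
    ((η l : ℂ) * (φ l q.1 * fker (f * q.1))) * starRingEnd ℂ (φ l q.2 * fker (f * q.2)) with hg
  have hpt : ∀ q : ℝ × ℝ,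
      (∑' l, (η l : ℂ) * φ l q.1 * starRingEnd ℂ (φ l q.2)) * fker (f * q.1)
        * starRingEnd ℂ (fker (f * q.2)) = ∑' l, g l q := by
    intro q
    rw [← tsum_mul_right, ← tsum_mul_right]
    refine tsum_congr fun l => ?_
    simp only [hg, map_mul]
    ring
  have hAg : ∀ l, AEStronglyMeasurable (fun s => φ l s * fker (f * s)) volume :=
    fun l => (hφ l).1.mul (hfc.comp (continuous_const.mul continuous_id)).aestronglyMeasurable
  have hgm : ∀ l, AEStronglyMeasurable (g l) volume := by
    intro l
    have h1 : AEStronglyMeasurable (fun q : ℝ × ℝ => φ l q.1 * fker (f * q.1)) volume := by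
      rw [Measure.volume_eq_prod]; exact (hAg l).comp_fst
    have h2 : AEStronglyMeasurable (fun q : ℝ × ℝ => φ l q.2 * fker (f * q.2)) volume := by
      rw [Measure.volume_eq_prod]; exact (hAg l).comp_snd
    exact (h1.const_mul _).mul (Complex.continuous_conj.comp_aestronglyMeasurable h2)
  have hnrm : ∀ l (q : ℝ × ℝ),
      (‖g l q‖₊ : ℝ≥0∞) = ENNReal.ofReal (η l) * ((‖φ l q.1‖₊ : ℝ≥0∞) * (‖φ l q.2‖₊ : ℝ≥0∞)) := by
    intro l q
    simp only [hg, nnnorm_mul, RCLike.nnnorm_conj, fker_nnnorm, mul_one]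
    push_cast
    rw [ENNReal.ofReal, mul_assoc]
    congr 2
    ext
    simp [Complex.norm_real, _root_.abs_of_nonneg (hη l), max_eq_left (hη l)]
  have hlint : ∀ l, (∫⁻ q : ℝ × ℝ, ‖g l q‖₊) = ENNReal.ofReal (η l * (∫ s, ‖φ l s‖) ^ 2) := by
    intro l
    simp_rw [hnrm l]
    simp only [← enorm_eq_nnnorm]
    rw [lintegral_const_mul' _ _ ENNReal.ofReal_ne_top, Measure.volume_eq_prod,
      lintegral_prod_mul ((hφ l).1.enorm) ((hφ l).1.enorm),
      ← ofReal_integral_norm_eq_lintegral_enorm (hφ l),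
      ← ENNReal.ofReal_mul (integral_nonneg fun s => norm_nonneg _),
      ← ENNReal.ofReal_mul (hη l)]
    congr 1
    ring
  have hne : (∑' l, ∫⁻ q : ℝ × ℝ, ‖g l q‖₊) ≠ ⊤ := by
    simp_rw [hlint]
    rw [← ENNReal.ofReal_tsum_of_nonneg (fun l => mul_nonneg (hη l) (sq_nonneg _)) hsum]
    exact ENNReal.ofReal_ne_top
  calc (∫ q : ℝ × ℝ, (∑' l, (η l : ℂ) * φ l q.1 * starRingEnd ℂ (φ l q.2)) * fker (f * q.1)
        * starRingEnd ℂ (fker (f * q.2)))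
      = ∫ q : ℝ × ℝ, ∑' l, g l q := by simp_rw [hpt]
    _ = ∑' l, ∫ q : ℝ × ℝ, g l q := integral_tsum hgm hne
    _ = ∑' l, (η l : ℂ) *
          ((∫ t, φ l t * fker (f * t)) * starRingEnd ℂ (∫ t, φ l t * fker (f * t))) := by
        refine tsum_congr fun l => ?_
        have := integral_prod_mul (μ := (volume : Measure ℝ)) (ν := (volume : Measure ℝ))
          (fun s => (η l : ℂ) * (φ l s * fker (f * s)))
          (fun t => starRingEnd ℂ (φ l t * fker (f * t)))
        rw [show (∫ q : ℝ × ℝ, g l q) = ∫ q : ℝ × ℝ, ((η l : ℂ) * (φ l q.1 * fker (f * q.1))) *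
            starRingEnd ℂ (φ l q.2 * fker (f * q.2)) from rfl]
        rw [Measure.volume_eq_prod, this, integral_const_mul, integral_conj]
        ring

theorem stmt_2 (ψ : ℝ → ℂ) (h : ℝ → ℝ)
    (hψ : Integrable ψ) (hh : Integrable h) (hh1 : ∫ u, h u = 1)
    (hint : Integrable (fun p : ℝ × ℝ × ℝ =>
      (h p.2.2 : ℂ) * ψ (p.1 - p.2.2) * starRingEnd ℂ (ψ (p.2.1 - p.2.2))))
    (K : ℝ → ℝ → ℂ)
    (hK : ∀ s t, K s t = ∫ u, (h u : ℂ) * ψ (s - u) * starRingEnd ℂ (ψ (t - u)))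
    (φ : ℕ → ℝ → ℂ) (η : ℕ → ℝ)
    (hφ : ∀ l, Integrable (φ l)) (hη : ∀ l, 0 ≤ η l)
    (hsum : Summable (fun l => η l * (∫ s, ‖φ l s‖) ^ 2))
    (hKexp : ∀ s t, K s t = ∑' l, (η l : ℂ) * φ l s * starRingEnd ℂ (φ l t))
    (Ψ : ℝ → ℂ) (hΨ : ∀ f, Ψ f = ∫ t, ψ t * fker (f * t))
    (Φ : ℕ → ℝ → ℂ) (hΦ : ∀ l f, Φ l f = ∫ t, φ l t * fker (f * t))
    (f : ℝ) :
    ∑' l, (η l : ℂ) * Complex.normSq (Φ l f) = Complex.normSq (Ψ f) := by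
  have key : (∫ q : ℝ × ℝ, (∫ u, (h u : ℂ) * ψ (q.1 - u) * starRingEnd ℂ (ψ (q.2 - u)))
        * fker (f * q.1) * starRingEnd ℂ (fker (f * q.2)))
      = ∫ q : ℝ × ℝ, (∑' l, (η l : ℂ) * φ l q.1 * starRingEnd ℂ (φ l q.2))
        * fker (f * q.1) * starRingEnd ℂ (fker (f * q.2)) := by
    refine integral_congr_ae (Filter.Eventually.of_forall fun q => ?_)
    simp only []
    rw [← hK q.1 q.2, hKexp q.1 q.2]
  have hA := stepA ψ h hψ hh hh1 hint f
  have hB := stepB φ η hφ hη hsum f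
  calc ∑' l, (η l : ℂ) * Complex.normSq (Φ l f)
      = ∑' l, (η l : ℂ) *
          ((∫ t, φ l t * fker (f * t)) * starRingEnd ℂ (∫ t, φ l t * fker (f * t))) := by
        refine tsum_congr fun l => ?_
        rw [← hΦ l f, Complex.mul_conj]
    _ = ∫ q : ℝ × ℝ, (∑' l, (η l : ℂ) * φ l q.1 * starRingEnd ℂ (φ l q.2))
        * fker (f * q.1) * starRingEnd ℂ (fker (f * q.2)) := hB.symm
    _ = (∫ q : ℝ × ℝ, (∫ u, (h u : ℂ) * ψ (q.1 - u) * starRingEnd ℂ (ψ (q.2 - u)))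
        * fker (f * q.1) * starRingEnd ℂ (fker (f * q.2))) := key.symm
    _ = (∫ t, ψ t * fker (f * t)) * starRingEnd ℂ (∫ t, ψ t * fker (f * t)) := hA
    _ = Complex.normSq (Ψ f) := by rw [← hΨ f, Complex.mul_conj]
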